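/- Let λ > 0 and let η : [0,∞) → ℝ be twice continuously differentiable with η(0) = 0, η'(0) = 1, and (1/2)η''(x) − q(x)η'(x) = −λη(x) for all x ≥ 0. Assume η is strictly increasing on [0,∞), that ∫₀^∞ e^{Q(y)} dy = ∞, and that S = ∫₀^∞ e^{Q(y)} (∫_y^∞ e^{−Q(z)} dz) dy = ∞. Then η(x)/Λ(x) → 0 as x → ∞, where Λ(x) = ∫₀ˣ e^{Q(y)} dy. -/

import Mathlib

/-!
By the ODE, the weighted derivative `g = e^{-Q} η'` satisfies `g' = -2λ η e^{-Q} ≤ 0` (as `η`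
increases from `η 0 = 0`), so `g` is nonincreasing. If `g` stayed above some `ε > 0`, then
`η ≥ ε Λ`, hence `g T ≤ g 0 - 2λε ∫₀^T Λ e^{-Q}`; by Tonelli the last integral tends to `S = ∞`,
which is absurd. So eventually `η' = g Λ' ≤ ε Λ'`, and since `Λ → ∞` this forces `η / Λ → 0`.
-/

open MeasureTheory Set Filter Topology
open scoped ENNReal

theorem hasDerivWithinAt_integral_Ici {f : ℝ → ℝ} {a b : ℝ} (hf : ContinuousOn f (Ici a))
    (hb : b ∈ Ici a) : HasDerivWithinAt (fun x => ∫ t in a..x, f t) (f b) (Ici a) b := by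
  have hint : IntervalIntegrable f volume a b :=
    (hf.mono (uIcc_of_le (mem_Ici.1 hb) ▸ Icc_subset_Ici_self)).intervalIntegrable
  have hmeas : StronglyMeasurableAtFilter f (𝓝[Ioi a] b) :=
    ⟨Ioi a, self_mem_nhdsWithin,
      (hf.mono Ioi_subset_Ici_self).aestronglyMeasurable measurableSet_Ioi⟩
  rcases (mem_Ici.1 hb).eq_or_lt with rfl | hab
  · exact intervalIntegral.integral_hasDerivWithinAt_right hint hmeas
      ((hf a hb).mono Ioi_subset_Ici_self)
  · rw [nhdsWithin_eq_nhds.2 (Ioi_mem_nhds hab)] at hmeas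
    exact (intervalIntegral.integral_hasDerivAt_right hint hmeas
      (hf.continuousAt (Ici_mem_nhds hab))).hasDerivWithinAt

theorem le_of_hasDerivWithinAt_Ici_le {f g f' g' : ℝ → ℝ} {a x : ℝ}
    (hf : ∀ y ∈ Ici a, HasDerivWithinAt f (f' y) (Ici a) y)
    (hg : ∀ y ∈ Ici a, HasDerivWithinAt g (g' y) (Ici a) y)
    (ha : f a ≤ g a) (hle : ∀ y ∈ Ici a, f' y ≤ g' y) (hx : a ≤ x) : f x ≤ g x :=
  image_le_of_deriv_right_le_deriv_boundary
    (fun y hy => (hf y hy.1).continuousWithinAt.mono Icc_subset_Ici_self)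
    (fun y hy => (hf y hy.1).mono (Ici_subset_Ici.2 hy.1)) ha
    (fun y hy => (hg y hy.1).continuousWithinAt.mono Icc_subset_Ici_self)
    (fun y hy => (hg y hy.1).mono (Ici_subset_Ici.2 hy.1)) (fun y hy => hle y hy.1) ⟨hx, le_rfl⟩

theorem tendsto_intervalIntegral_atTop_of_lintegral_eq_top {f : ℝ → ℝ} {a : ℝ}
    (hf : ContinuousOn f (Ici a)) (hf0 : ∀ x ∈ Ici a, 0 ≤ f x)
    (h : ∫⁻ x in Ioi a, ENNReal.ofReal (f x) = ∞) :
    Tendsto (fun x => ∫ t in a..x, f t) atTop atTop := by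
  have hint : ∀ b, IntegrableOn f (Ioc a b) := fun b =>
    (hf.mono Icc_subset_Ici_self).integrableOn_Icc.mono_set Ioc_subset_Icc_self
  rw [tendsto_atTop_atTop]
  intro M
  by_contra! hM
  have hbdd : ∀ᶠ b in atTop, ∫ t in a..b, ‖f t‖ ≤ M := by
    filter_upwards [eventually_ge_atTop a] with b hab
    obtain ⟨c, hbc, hc⟩ := hM b
    calc ∫ t in a..b, ‖f t‖ = ∫ t in a..b, f t :=
          intervalIntegral.integral_congr fun t ht =>
            Real.norm_of_nonneg (hf0 t (uIcc_of_le hab ▸ ht).1)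
      _ ≤ ∫ t in a..c, f t :=
          intervalIntegral.integral_mono_interval le_rfl hab hbc
            ((ae_restrict_mem measurableSet_Ioc).mono fun t ht => hf0 t ht.1.le)
            ((intervalIntegrable_iff_integrableOn_Ioc_of_le (hab.trans hbc)).2 (hint c))
      _ ≤ M := hc.le
  have hfin := (integrableOn_Ioi_of_intervalIntegral_norm_bounded M a hint tendsto_id hbdd).2
  rw [hasFiniteIntegral_iff_ofReal
    ((ae_restrict_mem measurableSet_Ioi).mono fun t ht => hf0 t (mem_Ioi.1 ht).le)] at hfin
  exact hfin.ne h

theorem lintegral_Ioi_mul_lintegral_Ioi_swap {μ : Measure ℝ} [SFinite μ] {F G : ℝ → ℝ≥0∞}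
    {a : ℝ} (hF : AEMeasurable F (μ.restrict (Ioi a)))
    (hG : AEMeasurable G (μ.restrict (Ioi a))) :
    ∫⁻ y in Ioi a, F y * ∫⁻ z in Ioi y, G z ∂μ ∂μ =
      ∫⁻ z in Ioi a, (∫⁻ y in Ioo a z, F y ∂μ) * G z ∂μ := by
  set K : ℝ → ℝ → ℝ≥0∞ := fun y z => (Iio z).indicator F y * G z
  have hK : AEMeasurable (Function.uncurry K)
      ((μ.restrict (Ioi a)).prod (μ.restrict (Ioi a))) := by
    have hK' : Function.uncurry K =
        fun p => {p : ℝ × ℝ | p.1 < p.2}.indicator (F ∘ Prod.fst) p * G p.2 := by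
      ext ⟨y, z⟩; rfl
    rw [hK']
    exact (hF.comp_fst.indicator (measurableSet_lt measurable_fst measurable_snd)).mul
      hG.comp_snd
  calc ∫⁻ y in Ioi a, F y * ∫⁻ z in Ioi y, G z ∂μ ∂μ
      = ∫⁻ y in Ioi a, ∫⁻ z in Ioi a, K y z ∂μ ∂μ := by
        refine setLIntegral_congr_fun measurableSet_Ioi fun y hy => ?_
        have hKy : K y = (Ioi y).indicator fun z => F y * G z := by
          ext z; by_cases hyz : y < z <;> simp [K, hyz]
        rw [hKy, lintegral_indicator measurableSet_Ioi, Measure.restrict_restrict measurableSet_Ioi,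
          inter_eq_left.2 (Ioi_subset_Ioi (mem_Ioi.1 hy).le)]
        exact (lintegral_const_mul'' _
          (hG.mono_measure (Measure.restrict_mono (Ioi_subset_Ioi (mem_Ioi.1 hy).le) le_rfl))).symm
    _ = ∫⁻ z in Ioi a, ∫⁻ y in Ioi a, K y z ∂μ ∂μ := lintegral_lintegral_swap hK
    _ = ∫⁻ z in Ioi a, (∫⁻ y in Ioo a z, F y ∂μ) * G z ∂μ := by
        refine lintegral_congr fun z => ?_
        rw [lintegral_mul_const'' _ (hF.indicator measurableSet_Iio),
          lintegral_indicator measurableSet_Iio, Measure.restrict_restrict measurableSet_Iio,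
          Iio_inter_Ioi]

theorem tendsto_intervalIntegral_primitive_mul_atTop {F G : ℝ → ℝ} {a : ℝ}
    (hF : ContinuousOn F (Ici a)) (hG : ContinuousOn G (Ici a))
    (hF0 : ∀ x ∈ Ici a, 0 ≤ F x) (hG0 : ∀ x ∈ Ici a, 0 ≤ G x)
    (h : ∫⁻ y in Ioi a, ENNReal.ofReal (F y) * ∫⁻ z in Ioi y, ENNReal.ofReal (G z) = ∞) :
    Tendsto (fun x => ∫ t in a..x, (∫ s in a..t, F s) * G t) atTop atTop := by
  have hprim0 : ∀ t ∈ Ici a, 0 ≤ ∫ s in a..t, F s := fun t ht =>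
    intervalIntegral.integral_nonneg ht fun s hs => hF0 s hs.1
  have hprim : ContinuousOn (fun t => ∫ s in a..t, F s) (Ici a) := fun t ht =>
    (hasDerivWithinAt_integral_Ici hF ht).continuousWithinAt
  refine tendsto_intervalIntegral_atTop_of_lintegral_eq_top (hprim.mul hG)
    (fun t ht => mul_nonneg (hprim0 t ht) (hG0 t ht)) ?_
  have hmeas : ∀ {H : ℝ → ℝ}, ContinuousOn H (Ici a) →
      AEMeasurable (fun x => ENNReal.ofReal (H x)) (volume.restrict (Ioi a)) := fun hH =>
    ENNReal.measurable_ofReal.comp_aemeasurable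
      ((hH.mono Ioi_subset_Ici_self).aemeasurable measurableSet_Ioi)
  rw [← h, lintegral_Ioi_mul_lintegral_Ioi_swap (hmeas hF) (hmeas hG)]
  refine setLIntegral_congr_fun measurableSet_Ioi fun z hz => ?_
  have hz' : a ≤ z := (mem_Ioi.1 hz).le
  rw [ENNReal.ofReal_mul (hprim0 z hz'), intervalIntegral.integral_of_le hz',
    integral_Ioc_eq_integral_Ioo, ofReal_integral_eq_lintegral_ofReal
      ((hF.mono Icc_subset_Ici_self).integrableOn_Icc.mono_set Ioo_subset_Icc_self)
      ((ae_restrict_mem measurableSet_Ioo).mono fun s hs => hF0 s (mem_Ioo.1 hs).1.le)]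

theorem tendsto_div_atTop_zero_of_deriv_le {f G f' G' : ℝ → ℝ} {a : ℝ}
    (hf : ∀ x ∈ Ici a, HasDerivWithinAt f (f' x) (Ici a) x)
    (hG : ∀ x ∈ Ici a, HasDerivWithinAt G (G' x) (Ici a) x)
    (hGtop : Tendsto G atTop atTop) (hf0 : ∀ x ∈ Ici a, 0 ≤ f x)
    (hle : ∀ ε > 0, ∀ᶠ x in atTop, f' x ≤ ε * G' x) :
    Tendsto (fun x => f x / G x) atTop (𝓝 0) := by
  refine tendsto_order.2 ⟨fun b hb => ?_, fun ε hε => ?_⟩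
  · filter_upwards [eventually_ge_atTop a, hGtop.eventually_gt_atTop 0] with x hxa hGx
    exact hb.trans_le (div_nonneg (hf0 x hxa) hGx.le)
  obtain ⟨X, hX⟩ := eventually_atTop.1 ((hle (ε / 2) (half_pos hε)).and (eventually_ge_atTop a))
  have hXa : a ≤ X := (hX X le_rfl).2
  have hcomp : ∀ x, X ≤ x → f x ≤ f X + ε / 2 * (G x - G X) := fun x hx =>
    le_of_hasDerivWithinAt_Ici_le (g := fun x => f X + ε / 2 * (G x - G X))
      (fun y hy => (hf y (hXa.trans hy)).mono (Ici_subset_Ici.2 hXa))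
      (fun y hy => ((((hG y (hXa.trans hy)).mono (Ici_subset_Ici.2 hXa)).sub_const
        (G X)).const_mul (ε / 2)).const_add (f X))
      (by simp) (fun y hy => (hX y hy).1) hx
  have hsmall : ∀ᶠ x in atTop, (f X - ε / 2 * G X) * (G x)⁻¹ < ε / 2 := by
    refine (tendsto_order.1 ?_).2 _ (half_pos hε)
    simpa using hGtop.inv_tendsto_atTop.const_mul (f X - ε / 2 * G X)
  filter_upwards [eventually_ge_atTop X, hGtop.eventually_gt_atTop 0, hsmall] with x hx hGx hCx
  rw [← div_eq_mul_inv, div_lt_iff₀ hGx] at hCx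
  rw [div_lt_iff₀ hGx]
  linarith [hcomp x hx]

theorem eventually_le_mul_exp_of_hasDerivWithinAt {Q η η' : ℝ → ℝ} {a c ε : ℝ} (hc : 0 < c)
    (hε : 0 < ε) (hQ : ContinuousOn Q (Ici a))
    (hη : ∀ x ∈ Ici a, HasDerivWithinAt η (η' x) (Ici a) x) (hηa : η a = 0)
    (hη_nonneg : ∀ x ∈ Ici a, 0 ≤ η x)
    (hg : ∀ x ∈ Ici a, HasDerivWithinAt (fun x => Real.exp (-Q x) * η' x)
      (-c * η x * Real.exp (-Q x)) (Ici a) x)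
    (hW : Tendsto (fun x => ∫ t in a..x, (∫ s in a..t, Real.exp (Q s)) * Real.exp (-Q t))
      atTop atTop) :
    ∀ᶠ x in atTop, η' x ≤ ε * Real.exp (Q x) := by
  set g := fun x => Real.exp (-Q x) * η' x
  set Λ := fun x => ∫ s in a..x, Real.exp (Q s)
  have hΛ : ∀ x ∈ Ici a, HasDerivWithinAt Λ (Real.exp (Q x)) (Ici a) x := fun x hx =>
    hasDerivWithinAt_integral_Ici (Real.continuous_exp.comp_continuousOn hQ) hx
  have hη' : ∀ x, η' x = g x * Real.exp (Q x) := fun x => by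
    rw [mul_right_comm, ← Real.exp_add, neg_add_cancel, Real.exp_zero, one_mul]
  have hganti : AntitoneOn g (Ici a) := by
    refine antitoneOn_of_hasDerivWithinAt_nonpos (convex_Ici a)
      (fun x hx => (hg x hx).continuousWithinAt) (fun x hx => (hg x (interior_subset hx)).mono
      interior_subset) fun x hx => ?_
    rw [neg_mul, neg_mul, neg_nonpos]
    exact mul_nonneg (mul_nonneg hc.le (hη_nonneg x (interior_subset hx))) (Real.exp_pos _).le
  suffices ∃ X ∈ Ici a, g X ≤ ε by
    obtain ⟨X, hXa, hX⟩ := this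
    filter_upwards [eventually_ge_atTop X] with x hx
    rw [hη']
    exact mul_le_mul_of_nonneg_right ((hganti hXa (hXa.trans hx) hx).trans hX)
      (Real.exp_pos _).le
  by_contra! hgt
  have hεΛ : ∀ x ∈ Ici a, ε * Λ x ≤ η x := fun x hx =>
    le_of_hasDerivWithinAt_Ici_le (fun y hy => (hΛ y hy).const_mul ε) hη (by simp [Λ, hηa])
      (fun y hy => by
        rw [hη']; exact mul_le_mul_of_nonneg_right (hgt y hy).le (Real.exp_pos _).le) hx
  set W := fun x => ∫ t in a..x, Λ t * Real.exp (-Q t)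
  have hΛc : ContinuousOn Λ (Ici a) := fun y hy => (hΛ y hy).continuousWithinAt
  have hW' : ∀ x ∈ Ici a, HasDerivWithinAt W (Λ x * Real.exp (-Q x)) (Ici a) x := fun x hx =>
    hasDerivWithinAt_integral_Ici (hΛc.mul (Real.continuous_exp.comp_continuousOn hQ.neg)) hx
  have hdecr : ∀ x ∈ Ici a, g x + c * ε * W x ≤ g a := fun x hx =>
    le_of_hasDerivWithinAt_Ici_le (f := fun x => g x + c * ε * W x) (g := fun _ => g a)
      (fun y hy => (hg y hy).add ((hW' y hy).const_mul (c * ε)))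
      (fun y _ => hasDerivWithinAt_const y (Ici a) (g a)) (by simp [W])
      (fun y hy => by
        nlinarith [mul_nonneg (mul_nonneg hc.le (Real.exp_pos (-Q y)).le)
          (sub_nonneg.2 (hεΛ y hy))]) hx
  obtain ⟨T, hT, hTa⟩ := ((hW.eventually_gt_atTop ((g a - ε) / (c * ε))).and
    (eventually_ge_atTop a)).exists
  rw [div_lt_iff₀ (by positivity)] at hT
  nlinarith [hdecr T hTa, hgt T hTa]

theorem stmt_6_general (q Q : ℝ → ℝ) (hq : ContDiffOn ℝ 1 q (Ici 0))
    (hQ : ∀ y, Q y = ∫ t in (0:ℝ)..y, 2 * q t)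
    (lam : ℝ) (hlam : 0 < lam) (η η' η'' : ℝ → ℝ)
    (hη' : ∀ x ∈ Ici (0:ℝ), HasDerivWithinAt η (η' x) (Ici 0) x)
    (hη'' : ∀ x ∈ Ici (0:ℝ), HasDerivWithinAt η' (η'' x) (Ici 0) x)
    (hη0 : η 0 = 0)
    (hode : ∀ x ≥ (0:ℝ), (1/2) * η'' x - q x * η' x = -lam * η x)
    (hmono : StrictMonoOn η (Ici 0))
    (hΛ : ∫⁻ y in Ioi (0:ℝ), ENNReal.ofReal (Real.exp (Q y)) = ⊤)
    (hS : ∫⁻ y in Ioi (0:ℝ), ENNReal.ofReal (Real.exp (Q y)) *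
        ∫⁻ z in Ioi y, ENNReal.ofReal (Real.exp (-(Q z))) = ⊤) :
    Tendsto (fun x => η x / ∫ y in (0:ℝ)..x, Real.exp (Q y)) atTop (nhds 0) := by
  have hQ' : ∀ x ∈ Ici (0:ℝ), HasDerivWithinAt Q (2 * q x) (Ici 0) x := fun x hx =>
    (hasDerivWithinAt_integral_Ici (continuousOn_const.mul hq.continuousOn) hx).congr
      (fun y _ => hQ y) (hQ x)
  have hQc : ContinuousOn Q (Ici 0) := fun x hx => (hQ' x hx).continuousWithinAt
  have hE : ContinuousOn (fun x => Real.exp (Q x)) (Ici 0) :=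
    Real.continuous_exp.comp_continuousOn hQc
  have hexp_nonneg : ∀ {R : ℝ → ℝ}, ∀ x ∈ Ici (0:ℝ), 0 ≤ Real.exp (R x) := fun _ _ =>
    (Real.exp_pos _).le
  have hη_nonneg : ∀ x ∈ Ici (0:ℝ), 0 ≤ η x := fun x hx =>
    hη0 ▸ hmono.monotoneOn self_mem_Ici hx hx
  have hg : ∀ x ∈ Ici (0:ℝ), HasDerivWithinAt (fun x => Real.exp (-Q x) * η' x)
      (-(2 * lam) * η x * Real.exp (-Q x)) (Ici 0) x := fun x hx => by
    have hexp : HasDerivWithinAt (fun x => Real.exp (-Q x)) (Real.exp (-Q x) * -(2 * q x))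
        (Ici 0) x := (hQ' x hx).neg.exp
    refine (hexp.mul (hη'' x hx)).congr_deriv ?_
    linear_combination 2 * Real.exp (-Q x) * hode x hx
  refine tendsto_div_atTop_zero_of_deriv_le hη'
    (fun x hx => hasDerivWithinAt_integral_Ici hE hx)
    (tendsto_intervalIntegral_atTop_of_lintegral_eq_top hE hexp_nonneg hΛ) hη_nonneg
    fun ε hε => eventually_le_mul_exp_of_hasDerivWithinAt (by positivity) hε hQc hη' hη0
      hη_nonneg hg ?_
  exact tendsto_intervalIntegral_primitive_mul_atTop hE
    (Real.continuous_exp.comp_continuousOn hQc.neg) hexp_nonneg hexp_nonneg hS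

/-- With `λ > 0` and `η` as in STATEMENT 0, if `η` is strictly
increasing on `[0,∞)`, `∫₀^∞ exp (Q y) dy = ∞` and
`S = ∫₀^∞ exp (Q y) (∫_y^∞ exp (-(Q z)) dz) dy = ∞`, then
`η x / Λ x → 0` as `x → ∞`, where `Λ x = ∫₀ˣ exp (Q y) dy`. -/
theorem stmt_6 (q Q : ℝ → ℝ) (hq : ContDiffOn ℝ 1 q (Ici 0))
    (hQ : ∀ y, Q y = ∫ t in (0:ℝ)..y, 2 * q t)
    (lam : ℝ) (hlam : 0 < lam) (η η' η'' : ℝ → ℝ)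
    (hη' : ∀ x ∈ Ici (0:ℝ), HasDerivWithinAt η (η' x) (Ici 0) x)
    (hη'' : ∀ x ∈ Ici (0:ℝ), HasDerivWithinAt η' (η'' x) (Ici 0) x)
    (hη''c : ContinuousOn η'' (Ici 0))
    (hη0 : η 0 = 0) (hη'0 : η' 0 = 1)
    (hode : ∀ x ≥ (0:ℝ), (1/2) * η'' x - q x * η' x = -lam * η x)
    (hmono : StrictMonoOn η (Ici 0))
    (hΛ : ∫⁻ y in Ioi (0:ℝ), ENNReal.ofReal (Real.exp (Q y)) = ⊤)
    (hS : ∫⁻ y in Ioi (0:ℝ), ENNReal.ofReal (Real.exp (Q y)) *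
        ∫⁻ z in Ioi y, ENNReal.ofReal (Real.exp (-(Q z))) = ⊤) :
    Tendsto (fun x => η x / ∫ y in (0:ℝ)..x, Real.exp (Q y)) atTop (nhds 0) :=
  stmt_6_general q Q hq hQ lam hlam η η' η'' hη' hη'' hη0 hode hmono hΛ hS
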